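/- Let n ≥ 3, ℓ ≥ 1, write z = (z₁, z₂, z₃, z̃) ∈ ℂ³ × ℂ^{n−3}, and let σ₁(z) = Re(z₁z₂ + z₁·conj(z₃)). Let h be a real-valued C^ℓ function on an open neighbourhood W of 0 in ℂ^n with h(0) = 0, set γ = 1 + h, and on { z ∈ W : γ(z) > 0 } define σ(z) = Re(z₁z₂ + z₁·conj(z₃)) + |z₁|² h(z) and Ψ(z) = ( √(γ(z)) z₁, z₂/√(γ(z)), ((γ(z) − 1)/√(γ(z))) z₁ + z₃/√(γ(z)), z̃ ). Then: (a) σ₁(Ψ(z)) = σ(z) for every such z, so Ψ maps { σ = 0 } into N₁ = { σ₁ = 0 } and maps { z₁ = 0 } into { z₁ = 0 }; (b) Ψ is C^ℓ on a neighbourhood of 0 and its (real) Fréchet derivative at 0 is the identity; consequently Ψ restricts to a C^ℓ diffeomorphism between open neighbourhoods of 0 in ℂ^n. -/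

import Mathlib

/-!
`Ψ z = straighten m (γ z) z`, where `straighten m t` is the real-linear map
`(z₁, z₂, z₃, z̃) ↦ (√t z₁, z₂ / √t, ((t - 1) / √t) z₁ + z₃ / √t, z̃)`, smooth in `t > 0` and equal
to the identity at `t = 1`. Hence `Ψ` is `C^ℓ` where `γ > 0`, and since the linear argument
vanishes at `0`, `DΨ(0) = straighten m (γ 0) = id`; the inverse function theorem then gives the
local diffeomorphism. For (a), the shear in the third coordinate contributes
`Re(√γ z₁ · conj(((γ - 1) / √γ) z₁)) = h |z₁|²` to `σ₁`.
-/

open Complex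

noncomputable section

/-- `σ₁(z) = Re(z₁ z₂ + z₁ conj(z₃))` on `ℂ^n` (with `n = m + 3 ≥ 3`). -/
def sigma1 (m : ℕ) (z : EuclideanSpace ℂ (Fin (m + 3))) : ℝ :=
  (z 0 * z 1 + z 0 * (starRingEnd ℂ) (z 2)).re

open Set Topology
open scoped ContDiff

theorem ContDiffAt.exists_bijOn_contDiffOn_inverse {𝕜 E F : Type*} [RCLike 𝕜]
    [NormedAddCommGroup E] [NormedSpace 𝕜 E] [CompleteSpace E]
    [NormedAddCommGroup F] [NormedSpace 𝕜 F]
    {f : E → F} {f' : E ≃L[𝕜] F} {a : E} {n : WithTop ℕ∞} {U : Set E}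
    (hf : ContDiffAt 𝕜 n f a) (hf' : HasFDerivAt f (f' : E →L[𝕜] F) a) (hn : n ≠ 0)
    (hn' : n ≠ ∞) (hU : U ∈ 𝓝 a) :
    ∃ (V₁ : Set E) (V₂ : Set F) (g : F → E), IsOpen V₁ ∧ IsOpen V₂ ∧ a ∈ V₁ ∧ f a ∈ V₂ ∧
      V₁ ⊆ U ∧ BijOn f V₁ V₂ ∧ (∀ z ∈ V₁, g (f z) = z) ∧ ContDiffOn 𝕜 n g V₂ := by
  set e := hf.toOpenPartialHomeomorph f hf' hn
  obtain ⟨u, hu, hgu⟩ : ∃ u ∈ 𝓝 (f a), ∀ y ∈ u, ContDiffAt 𝕜 n e.symm y :=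
    ⟨_, (hf.to_localInverse hf' hn).eventually hn', fun _ => id⟩
  have hs : IsOpen (interior U ∩ (e.source ∩ e ⁻¹' interior u)) :=
    isOpen_interior.inter (e.isOpen_inter_preimage isOpen_interior)
  set e' := e.restrOpen _ hs
  have ha : a ∈ e'.source :=
    ⟨hf.mem_toOpenPartialHomeomorph_source hf' hn, mem_interior_iff_mem_nhds.2 hU,
      hf.mem_toOpenPartialHomeomorph_source hf' hn, mem_interior_iff_mem_nhds.2 hu⟩
  refine ⟨e'.source, e'.target, e.symm, e'.open_source, e'.open_target, ha, e'.map_source ha,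
    fun z hz => interior_subset hz.2.1, e'.bijOn, fun z hz => e'.left_inv hz, ?_⟩
  rintro y ⟨hy, -, -, hyu⟩
  rw [mem_preimage, e.right_inv hy] at hyu
  exact (hgu y (interior_subset hyu)).contDiffWithinAt

theorem hasFDerivAt_apply_self_zero {𝕜 E F : Type*} [NontriviallyNormedField 𝕜]
    [NormedAddCommGroup E] [NormedSpace 𝕜 E] [NormedAddCommGroup F] [NormedSpace 𝕜 F]
    {A : E → E →L[𝕜] F} (hA : DifferentiableAt 𝕜 A 0) :
    HasFDerivAt (fun x => A x x) (A 0) 0 := by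
  simpa using hA.hasFDerivAt.clm_apply (hasFDerivAt_id (0 : E))

namespace EuclideanSpace

variable {ι : Type*} [Fintype ι] [DecidableEq ι]

def matrixUnit (i j : ι) : EuclideanSpace ℂ ι →L[ℝ] EuclideanSpace ℂ ι :=
  ((EuclideanSpace.proj j).smulRight (EuclideanSpace.single i (1 : ℂ))).restrictScalars ℝ

@[simp]
theorem matrixUnit_apply (i j : ι) (z : EuclideanSpace ℂ ι) (k : ι) :
    matrixUnit i j z k = if k = i then z j else 0 := by
  simp [matrixUnit]

end EuclideanSpace

open EuclideanSpace

def straighten (m : ℕ) (t : ℝ) :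
    EuclideanSpace ℂ (Fin (m + 3)) →L[ℝ] EuclideanSpace ℂ (Fin (m + 3)) :=
  ContinuousLinearMap.id ℝ _ + (√t - 1) • matrixUnit 0 0 +
    ((√t)⁻¹ - 1) • (matrixUnit 1 1 + matrixUnit 2 2) + ((t - 1) / √t) • matrixUnit 2 0

section
variable {m : ℕ}

theorem straighten_one : straighten m 1 = ContinuousLinearMap.id ℝ _ := by
  ext z k
  simp [straighten]

theorem contDiffAt_straighten {n : WithTop ℕ∞} {t : ℝ} (ht : 0 < t) :
    ContDiffAt ℝ n (straighten m) t := by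
  have hs : ContDiffAt ℝ n (fun t : ℝ => √t) t := contDiffAt_id.sqrt ht.ne'
  have hs0 : √t ≠ 0 := (Real.sqrt_pos.2 ht).ne'
  unfold straighten
  fun_prop (disch := assumption)

theorem straighten_apply (t : ℝ) (z : EuclideanSpace ℂ (Fin (m + 3))) :
    straighten m t z = WithLp.toLp 2 (fun i => if i = 0 then (√t : ℂ) * z 0
      else if i = 1 then z 1 / (√t : ℂ)
      else if i = 2 then (((t - 1) / √t : ℝ) : ℂ) * z 0 + z 2 / (√t : ℂ)
      else z i) := by
  ext k
  simp only [straighten, add_apply, smul_apply,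
    ContinuousLinearMap.id_apply, WithLp.ofLp_add, WithLp.ofLp_smul, Pi.add_apply, Pi.smul_apply,
    matrixUnit_apply, real_smul]
  have h01 : (0 : Fin (m + 3)) ≠ 1 := by simp
  have h02 : (0 : Fin (m + 3)) ≠ 2 := by simp [Fin.ext_iff, Nat.mod_eq_of_lt]
  have h12 : (1 : Fin (m + 3)) ≠ 2 := by simp [Fin.ext_iff, Nat.mod_eq_of_lt]
  push_cast
  by_cases hk0 : k = 0
  · subst hk0; simp only [h01, h02, ↓reduceIte, mul_zero, add_zero]; ring
  by_cases hk1 : k = 1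
  · subst hk1; simp only [h01.symm, h12, ↓reduceIte, mul_zero, add_zero]; ring
  by_cases hk2 : k = 2
  · subst hk2; simp only [h02.symm, h12.symm, ↓reduceIte, mul_zero, add_zero, zero_add]; ring
  simp [hk0, hk1, hk2]

theorem sigma1_straighten {t : ℝ} (ht : 0 < t) (z : EuclideanSpace ℂ (Fin (m + 3))) :
    sigma1 m (straighten m t z) = sigma1 m z + ‖z 0‖ ^ 2 * (t - 1) := by
  have hs : ((√t : ℝ) : ℂ) ≠ 0 := ofReal_ne_zero.2 (Real.sqrt_pos.2 ht).ne'
  have key : (√t * z 0) * (z 1 / √t) +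
      (√t * z 0) * starRingEnd ℂ (((t - 1) / √t : ℝ) * z 0 + z 2 / √t) =
      z 0 * z 1 + z 0 * starRingEnd ℂ (z 2) + ((t - 1 : ℝ) : ℂ) * (z 0 * starRingEnd ℂ (z 0)) := by
    simp only [map_add, map_mul, map_div₀, conj_ofReal]
    push_cast
    field_simp
    ring
  have h0 : straighten m t z 0 = √t * z 0 := by rw [straighten_apply]; simp
  have h1 : straighten m t z 1 = z 1 / √t := by rw [straighten_apply]; simp
  have h2 : straighten m t z 2 = ((t - 1) / √t : ℝ) * z 0 + z 2 / √t := by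
    rw [straighten_apply]; simp [Fin.ext_iff, Nat.mod_eq_of_lt]
  rw [sigma1, h0, h1, h2, key, mul_conj, ← ofReal_mul, add_re, ofReal_re, normSq_eq_norm_sq,
    sigma1, mul_comm (t - 1)]

end

/-- The explicit map `Ψ` straightening the perturbed cone
`N = {σ = 0}` onto the model cone `N₁ = {σ₁ = 0}`: it satisfies `σ₁ ∘ Ψ = σ` where
`γ > 0`, preserves `{z₁ = 0}`, is `C^ℓ` near `0` with derivative the identity at `0`,
and hence restricts to a `C^ℓ` diffeomorphism between neighbourhoods of `0`. -/
theorem straightening_map_Psi (m ℓ : ℕ) (hℓ : 1 ≤ ℓ)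
    (W : Set (EuclideanSpace ℂ (Fin (m + 3))))
    (hWo : IsOpen W) (hW0 : (0 : EuclideanSpace ℂ (Fin (m + 3))) ∈ W)
    (h : EuclideanSpace ℂ (Fin (m + 3)) → ℝ)
    (hsm : ContDiffOn ℝ ℓ h W) (hh0 : h 0 = 0) :
    let γ : EuclideanSpace ℂ (Fin (m + 3)) → ℝ := fun z => 1 + h z
    let σ : EuclideanSpace ℂ (Fin (m + 3)) → ℝ := fun z => sigma1 m z + ‖z 0‖ ^ 2 * h z
    let Ψ : EuclideanSpace ℂ (Fin (m + 3)) → EuclideanSpace ℂ (Fin (m + 3)) := fun z =>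
      WithLp.toLp 2 (fun i => if i = 0 then (Real.sqrt (γ z) : ℂ) * z 0
        else if i = 1 then z 1 / (Real.sqrt (γ z) : ℂ)
        else if i = 2 then
          (((γ z - 1) / Real.sqrt (γ z) : ℝ) : ℂ) * z 0 + z 2 / (Real.sqrt (γ z) : ℂ)
        else z i)
    -- (a)
    (∀ z ∈ W, 0 < γ z → sigma1 m (Ψ z) = σ z) ∧
    (∀ z ∈ W, 0 < γ z → z 0 = 0 → (Ψ z) 0 = 0) ∧
    -- (b)
    (∃ W' : Set (EuclideanSpace ℂ (Fin (m + 3))),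
      IsOpen W' ∧ 0 ∈ W' ∧ W' ⊆ W ∧ ContDiffOn ℝ ℓ Ψ W' ∧
      HasFDerivAt Ψ (ContinuousLinearMap.id ℝ (EuclideanSpace ℂ (Fin (m + 3)))) 0 ∧
      ∃ (V₁ V₂ : Set (EuclideanSpace ℂ (Fin (m + 3))))
        (g : EuclideanSpace ℂ (Fin (m + 3)) → EuclideanSpace ℂ (Fin (m + 3))),
        IsOpen V₁ ∧ IsOpen V₂ ∧ 0 ∈ V₁ ∧ 0 ∈ V₂ ∧ V₁ ⊆ W' ∧
        Set.BijOn Ψ V₁ V₂ ∧ (∀ z ∈ V₁, g (Ψ z) = z) ∧ ContDiffOn ℝ ℓ g V₂) := by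
  intro γ σ Ψ
  have hΨ : Ψ = fun z => straighten m (γ z) z := funext fun z => (straighten_apply (γ z) z).symm
  have hγ : ContDiffOn ℝ ℓ γ W := contDiffOn_const.add hsm
  have hγ0 : γ 0 = 1 := by simp [γ, hh0]
  have hℓ0 : (ℓ : WithTop ℕ∞) ≠ 0 := by exact_mod_cast (by omega : ℓ ≠ 0)
  set W' := W ∩ γ ⁻¹' Ioi 0
  have hW' : IsOpen W' := hγ.continuousOn.isOpen_inter_preimage hWo isOpen_Ioi
  have h0W' : 0 ∈ W' := ⟨hW0, by simp [hγ0]⟩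
  have hstraighten : ∀ z ∈ W', ContDiffAt ℝ ℓ (fun z => straighten m (γ z)) z := fun z hz =>
    (contDiffAt_straighten hz.2).comp z (hγ.contDiffAt (hWo.mem_nhds hz.1))
  have hΨsmooth : ∀ z ∈ W', ContDiffAt ℝ ℓ Ψ z := fun z hz =>
    hΨ ▸ (hstraighten z hz).clm_apply contDiffAt_id
  have hΨ' : HasFDerivAt Ψ (ContinuousLinearMap.id ℝ _) 0 := by
    rw [hΨ, ← straighten_one (m := m), ← hγ0]
    exact hasFDerivAt_apply_self_zero ((hstraighten 0 h0W').differentiableAt hℓ0)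
  have hΨ0 : Ψ 0 = 0 := by rw [hΨ]; exact map_zero _
  refine ⟨fun z _ hz => ?_, fun z _ _ hz0 => by simp [Ψ, hz0], W', hW', h0W', inter_subset_left,
    fun z hz => (hΨsmooth z hz).contDiffWithinAt, hΨ', ?_⟩
  · rw [hΨ, sigma1_straighten hz]
    simp [σ, γ]
  · obtain ⟨V₁, V₂, g, hV₁, hV₂, h0V₁, h0V₂, hV₁W', hbij, hg, hgsmooth⟩ :=
      (hΨsmooth 0 h0W').exists_bijOn_contDiffOn_inverse (f' := ContinuousLinearEquiv.refl ℝ _)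
        hΨ' hℓ0 (by simp) (hW'.mem_nhds h0W')
    exact ⟨V₁, V₂, g, hV₁, hV₂, h0V₁, hΨ0 ▸ h0V₂, hV₁W', hbij, hg, hgsmooth⟩
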